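/- For a monoid S the following are equivalent: (i) every right S-act is InD-injective; (ii) every indecomposable right S-act is InD-injective; (iii) every right S-act is PInD-injective; (iv) every indecomposable right S-act is PInD-injective; (v) every indecomposable right S-act is injective; (vi) every right S-act is injective (S is right absolutely injective). -/

import Mathlib

universe u

/-- A right `S`-act structure on a nonempty type `A`: a right action of the monoid `S`. -/
class RightAct (S : Type u) [Monoid S] (A : Type u) : Type u where
  act : A → S → A
  act_one : ∀ a : A, act a 1 = a
  act_mul : ∀ (a : A) (s t : S), act (act a s) t = act a (s * t)
  nonempty : Nonempty A

infixl:70 " ⊛ " => RightAct.act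

/-- `S` is left reversible: every two right ideals (equiv. principal ones) intersect. -/
def LeftReversible (S : Type u) [Monoid S] : Prop :=
  ∀ a b : S, ∃ u v : S, a * u = b * v

/-- A left zero element of the monoid `S`. -/
def IsLeftZero (S : Type u) [Monoid S] (z : S) : Prop :=
  ∀ s : S, z * s = z

/-- `f : A → B` is a homomorphism of right `S`-acts. -/
def IsActHom (S : Type u) [Monoid S] {A B : Type u} [RightAct S A] [RightAct S B]
    (f : A → B) : Prop :=
  ∀ (a : A) (s : S), f (a ⊛ s) = f a ⊛ s

/-- The restriction of `f : A → B` to the subset `C` is a homomorphism of right `S`-acts. -/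
def IsActHomOn (S : Type u) [Monoid S] {A B : Type u} [RightAct S A] [RightAct S B]
    (f : A → B) (C : Set A) : Prop :=
  ∀ a ∈ C, ∀ s : S, f (a ⊛ s) = f a ⊛ s

/-- A subact: a nonempty subset closed under the action. -/
def IsSubact (S : Type u) [Monoid S] {A : Type u} [RightAct S A] (C : Set A) : Prop :=
  C.Nonempty ∧ ∀ a ∈ C, ∀ s : S, a ⊛ s ∈ C

/-- A zero element of an act: fixed by the action of every `s ∈ S`. -/
def IsZeroElem (S : Type u) [Monoid S] {A : Type u} [RightAct S A] (θ : A) : Prop :=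
  ∀ s : S, θ ⊛ s = θ

/-- A subset `D` (viewed as an act) is decomposable: it is the disjoint union of two
nonempty subacts. -/
def DecomposableSet (S : Type u) [Monoid S] {A : Type u} [RightAct S A] (D : Set A) : Prop :=
  ∃ B C : Set A, IsSubact S B ∧ IsSubact S C ∧ B ∪ C = D ∧ B ∩ C = ∅

/-- A subset (viewed as an act) is indecomposable. -/
def IndecomposableSet (S : Type u) [Monoid S] {A : Type u} [RightAct S A] (D : Set A) : Prop :=
  ¬ DecomposableSet S D

/-- The act `A` is decomposable. -/
def Decomposable (S : Type u) [Monoid S] (A : Type u) [RightAct S A] : Prop :=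
  DecomposableSet S (Set.univ : Set A)

/-- The act `A` is indecomposable. -/
def Indecomposable (S : Type u) [Monoid S] (A : Type u) [RightAct S A] : Prop :=
  ¬ Decomposable S A

/-- A cyclic act: generated by a single element. -/
def CyclicAct (S : Type u) [Monoid S] (A : Type u) [RightAct S A] : Prop :=
  ∃ a : A, ∀ x : A, ∃ s : S, x = a ⊛ s

/-- `A` is a retract of `B`. -/
def IsRetractOf (S : Type u) [Monoid S] (A B : Type u) [RightAct S A] [RightAct S B] : Prop :=
  ∃ (i : A → B) (p : B → A), IsActHom S i ∧ IsActHom S p ∧ ∀ a : A, p (i a) = a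

/-- `Q` is an injective act: every homomorphism from a subact `C` of any act `B` into `Q`
extends to `B`. -/
def ActInjective (S : Type u) [Monoid S] (Q : Type u) [RightAct S Q] : Prop :=
  ∀ (B : Type u) [RightAct S B], ∀ C : Set B, IsSubact S C →
    ∀ f : B → Q, IsActHomOn S f C →
      ∃ g : B → Q, IsActHom S g ∧ Set.EqOn g f C

/-- `Q` is InC-injective: injective relative to all embeddings into indecomposable acts. -/
def InCInjective (S : Type u) [Monoid S] (Q : Type u) [RightAct S Q] : Prop :=
  ∀ (B : Type u) [RightAct S B], Indecomposable S B → ∀ C : Set B, IsSubact S C →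
    ∀ f : B → Q, IsActHomOn S f C →
      ∃ g : B → Q, IsActHom S g ∧ Set.EqOn g f C

/-- `Q` is InD-injective: injective relative to all embeddings of indecomposable acts. -/
def InDInjective (S : Type u) [Monoid S] (Q : Type u) [RightAct S Q] : Prop :=
  ∀ (B : Type u) [RightAct S B], ∀ C : Set B, IsSubact S C → IndecomposableSet S C →
    ∀ f : B → Q, IsActHomOn S f C →
      ∃ g : B → Q, IsActHom S g ∧ Set.EqOn g f C

/-- `Q` is PInD-injective: every monomorphism from an indecomposable subact extends. -/
def PInDInjective (S : Type u) [Monoid S] (Q : Type u) [RightAct S Q] : Prop :=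
  ∀ (B : Type u) [RightAct S B], ∀ C : Set B, IsSubact S C → IndecomposableSet S C →
    ∀ f : B → Q, IsActHomOn S f C → Set.InjOn f C →
      ∃ g : B → Q, IsActHom S g ∧ Set.EqOn g f C

/-- `A` is quasi injective: homomorphisms from subacts of `A` to `A` extend to `A`. -/
def QuasiInjective (S : Type u) [Monoid S] (A : Type u) [RightAct S A] : Prop :=
  ∀ C : Set A, IsSubact S C → ∀ f : A → A, IsActHomOn S f C →
    ∃ g : A → A, IsActHom S g ∧ Set.EqOn g f C

/-- `A` is pseudo injective: monomorphisms from subacts of any act into `A` extend. -/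
def PseudoInjective (S : Type u) [Monoid S] (A : Type u) [RightAct S A] : Prop :=
  ∀ (C : Type u) [RightAct S C], ∀ B : Set C, IsSubact S B →
    ∀ f : C → A, IsActHomOn S f B → Set.InjOn f B →
      ∃ g : C → A, IsActHom S g ∧ Set.EqOn g f B

/-- A subact `Q` of `A` (viewed as an act in its own right) is injective. -/
def ActInjectiveSet (S : Type u) [Monoid S] {A : Type u} [RightAct S A] (Q : Set A) : Prop :=
  ∀ (B : Type u) [RightAct S B], ∀ C : Set B, IsSubact S C →
    ∀ f : B → A, IsActHomOn S f C → (∀ c ∈ C, f c ∈ Q) →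
      ∃ g : B → A, IsActHom S g ∧ (∀ b : B, g b ∈ Q) ∧ Set.EqOn g f C

/-- A subact `Q` of `A` (viewed as an act in its own right) is InD-injective. -/
def InDInjectiveSet (S : Type u) [Monoid S] {A : Type u} [RightAct S A] (Q : Set A) : Prop :=
  ∀ (B : Type u) [RightAct S B], ∀ C : Set B, IsSubact S C → IndecomposableSet S C →
    ∀ f : B → A, IsActHomOn S f C → (∀ c ∈ C, f c ∈ Q) →
      ∃ g : B → A, IsActHom S g ∧ (∀ b : B, g b ∈ Q) ∧ Set.EqOn g f C

/-- A subact `Q` of `A` (viewed as an act in its own right) is PInD-injective. -/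
def PInDInjectiveSet (S : Type u) [Monoid S] {A : Type u} [RightAct S A] (Q : Set A) : Prop :=
  ∀ (B : Type u) [RightAct S B], ∀ C : Set B, IsSubact S C → IndecomposableSet S C →
    ∀ f : B → A, IsActHomOn S f C → Set.InjOn f C → (∀ c ∈ C, f c ∈ Q) →
      ∃ g : B → A, IsActHom S g ∧ (∀ b : B, g b ∈ Q) ∧ Set.EqOn g f C

/-- The monoid `S` as a right act over itself, by multiplication. -/
instance selfAct (S : Type u) [Monoid S] : RightAct S S where
  act a s := a * s
  act_one := mul_one
  act_mul a s t := mul_assoc a s t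
  nonempty := ⟨1⟩

/-- `Q` is weakly injective: homomorphisms from right ideals of `S` into `Q` extend to `S`. -/
def WeaklyInjective (S : Type u) [Monoid S] (Q : Type u) [RightAct S Q] : Prop :=
  ∀ I : Set S, IsSubact S I → ∀ f : S → Q, IsActHomOn S f I →
    ∃ g : S → Q, IsActHom S g ∧ Set.EqOn g f I

/-- The relation whose equivalence closure has the indecomposable components as classes. -/
def ActRel (S : Type u) [Monoid S] {A : Type u} [RightAct S A] (a b : A) : Prop :=
  ∃ s : S, b = a ⊛ s

/-- The indecomposable component of the element `a` of an act. -/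
def ActComponent (S : Type u) [Monoid S] {A : Type u} [RightAct S A] (a : A) : Set A :=
  {b | Relation.EqvGen (ActRel S) a b}


/-! If every act is InD-injective then `S` has an element `z` with `s * z = z` for all `s`:
a left zero exists because the zero of `Option S` must be sent somewhere, and it is unique
because the subact `(1, z₁)S ∪ (z₂, 1)S` of `S × S` is not a retract of `S × S` when
`z₁ ≠ z₂`. Given such a `z`, the fibres of `b ↦ b ⊛ z` are indecomposable, so a homomorphism
defined on a subact extends fibre by fibre. The PInD-injective case reduces to the
InD-injective one through a pushout, and the image of an indecomposable subact is an
indecomposable subact, which handles the reduction to indecomposable codomains. -/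

variable {S : Type u} [Monoid S]

namespace RightAct

variable {A B : Type u} [RightAct S A] [RightAct S B]

instance prod : RightAct S (A × B) where
  act x s := (x.1 ⊛ s, x.2 ⊛ s)
  act_one x := by simp only [act_one]
  act_mul x s t := by simp only [act_mul]
  nonempty := ⟨(Classical.choice (nonempty S), Classical.choice (nonempty S))⟩

instance option : RightAct S (Option A) where
  act x s := x.map (· ⊛ s)
  act_one x := by cases x <;> simp [act_one]
  act_mul x s t := by cases x <;> simp [act_mul]
  nonempty := ⟨none⟩

instance sum : RightAct S (A ⊕ B) where
  act x s := x.map (· ⊛ s) (· ⊛ s)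
  act_one x := by cases x <;> simp [act_one]
  act_mul x s t := by cases x <;> simp [act_mul]
  nonempty := ⟨.inl (Classical.choice (nonempty S))⟩

abbrev subtype {K : Set A} (hK : IsSubact S K) : RightAct S K where
  act x s := ⟨x.1 ⊛ s, hK.2 x.1 x.2 s⟩
  act_one x := Subtype.ext (act_one x.1)
  act_mul x s t := Subtype.ext (act_mul x.1 s t)
  nonempty := hK.1.to_subtype

abbrev quotient (r : Setoid A) (hr : ∀ x y (s : S), r x y → r (x ⊛ s) (y ⊛ s)) :
    RightAct S (Quotient r) where
  act q s := Quotient.map (· ⊛ s) (fun x y h => hr x y s h) q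
  act_one q := Quotient.inductionOn q fun x => congrArg _ (act_one x)
  act_mul q s t := Quotient.inductionOn q fun x => congrArg _ (act_mul x s t)
  nonempty := ⟨⟦Classical.choice (nonempty S)⟧⟩

@[simp] lemma self_act (a s : S) : @act S _ S (selfAct S) a s = a * s := rfl

@[simp] lemma prod_act (x : A × B) (s : S) : x ⊛ s = (x.1 ⊛ s, x.2 ⊛ s) := rfl

@[simp] lemma sum_inl_act (a : A) (s : S) : (Sum.inl a : A ⊕ B) ⊛ s = Sum.inl (a ⊛ s) := rfl

@[simp] lemma sum_inr_act (b : B) (s : S) : (Sum.inr b : A ⊕ B) ⊛ s = Sum.inr (b ⊛ s) := rfl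

end RightAct

section
variable {A B : Type u} [RightAct S A] [RightAct S B]

lemma ActInjective.inDInjective (h : ActInjective S A) : InDInjective S A :=
  fun B _ C hC _ f hf => h B C hC f hf

lemma InDInjective.pInDInjective (h : InDInjective S A) : PInDInjective S A :=
  fun B _ C hC hCind f hf _ => h B C hC hCind f hf

lemma isSubact_univ (S : Type u) [Monoid S] (A : Type u) [RightAct S A] :
    IsSubact S (Set.univ : Set A) :=
  ⟨@Set.univ_nonempty _ (RightAct.nonempty S), fun _ _ _ => trivial⟩

lemma IsSubact.image {C : Set A} {f : A → B} (hC : IsSubact S C) (hf : IsActHomOn S f C) :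
    IsSubact S (f '' C) := by
  refine ⟨hC.1.image f, ?_⟩
  rintro _ ⟨c, hc, rfl⟩ s
  exact ⟨c ⊛ s, hC.2 c hc s, hf c hc s⟩

def ActRelOn (S : Type u) [Monoid S] {A : Type u} [RightAct S A] (E : Set A) (a b : A) : Prop :=
  a ∈ E ∧ ActRel S a b

lemma indecomposableSet_of_eqvGen {E : Set A} {e : A}
    (hE : ∀ x ∈ E, Relation.EqvGen (ActRelOn S E) e x) :
    IndecomposableSet S E := by
  rintro ⟨P, Q, hP, hQ, hU, hI⟩
  have disjoint : ∀ x ∈ P, x ∉ Q := fun x hxP hxQ =>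
    (hI ▸ ⟨hxP, hxQ⟩ : x ∈ (∅ : Set A))
  have same_piece : ∀ x y, Relation.EqvGen (ActRelOn S E) x y →
      (x ∈ P ↔ y ∈ P) := by
    intro x y hxy
    induction hxy with
    | rel a _ hab =>
      obtain ⟨haE, s, rfl⟩ := hab
      refine ⟨fun ha => hP.2 a ha s, fun has => ?_⟩
      rcases (hU ▸ haE : a ∈ P ∪ Q) with ha | ha
      · exact ha
      · exact absurd (hQ.2 a ha s) (disjoint _ has)
    | refl => rfl
    | symm _ _ _ ih => exact ih.symm
    | trans _ _ _ _ _ ih₁ ih₂ => exact ih₁.trans ih₂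
  obtain ⟨p, hp⟩ := hP.1
  obtain ⟨q, hq⟩ := hQ.1
  have hpE : p ∈ E := hU ▸ Or.inl hp
  have hqE : q ∈ E := hU ▸ Or.inr hq
  have hqP : q ∈ P := (same_piece _ _ (hE q hqE)).1 ((same_piece _ _ (hE p hpE)).2 hp)
  exact disjoint q hqP hq

lemma IndecomposableSet.image {D : Set A} {h : A → B} (hD : IndecomposableSet S D)
    (hDsub : IsSubact S D) (hh : IsActHomOn S h D) : IndecomposableSet S (h '' D) := by
  rintro ⟨P, Q, hP, hQ, hU, hI⟩
  have pullback : ∀ R : Set B, IsSubact S R → R ⊆ h '' D →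
      IsSubact S (D ∩ h ⁻¹' R) := by
    intro R hR hRD
    obtain ⟨_, hr⟩ := hR.1
    obtain ⟨d, hd, rfl⟩ := hRD hr
    refine ⟨⟨d, hd, hr⟩, fun x hx s => ⟨hDsub.2 x hx.1 s, ?_⟩⟩
    rw [Set.mem_preimage, hh x hx.1 s]
    exact hR.2 _ hx.2 s
  refine hD ⟨D ∩ h ⁻¹' P, D ∩ h ⁻¹' Q, pullback P hP (hU ▸ Set.subset_union_left),
    pullback Q hQ (hU ▸ Set.subset_union_right), ?_, ?_⟩
  · rw [← Set.inter_union_distrib_left, ← Set.preimage_union, hU]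
    exact Set.inter_eq_left.2 fun d hd => ⟨d, hd, rfl⟩
  · rw [← Set.inter_inter_distrib_left, ← Set.preimage_inter, hI, Set.preimage_empty,
      Set.inter_empty]

lemma IndecomposableSet.of_image {D : Set A} {h : A → B} (hD : IndecomposableSet S (h '' D))
    (hh : IsActHomOn S h D) (hinj : Set.InjOn h D) : IndecomposableSet S D := by
  rintro ⟨P, Q, hP, hQ, hU, hI⟩
  have hPD : P ⊆ D := hU ▸ Set.subset_union_left
  have hQD : Q ⊆ D := hU ▸ Set.subset_union_right
  refine hD ⟨h '' P, h '' Q, ?_, ?_, by rw [← Set.image_union, hU], ?_⟩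
  · exact hP.image fun p hp => hh p (hPD hp)
  · exact hQ.image fun q hq => hh q (hQD hq)
  · rw [← hinj.image_inter hPD hQD, hI, Set.image_empty]

lemma indecomposable_subtype {K : Set A} (hK : IsSubact S K) (hind : IndecomposableSet S K) :
    @Indecomposable S _ K (RightAct.subtype hK) := by
  let := RightAct.subtype hK
  refine IndecomposableSet.of_image (h := Subtype.val) ?_ (fun _ _ _ => rfl)
    Subtype.val_injective.injOn
  rwa [Set.image_univ, Subtype.range_coe]

lemma inDInjectiveSet_of_subtype {K : Set A} (hK : IsSubact S K)
    (h : @InDInjective S _ K (RightAct.subtype hK)) : InDInjectiveSet S K := by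
  classical
  let := RightAct.subtype hK
  intro B _ C hC hCind f hf hfK
  let f' : B → K := fun b => if hb : f b ∈ K then ⟨f b, hb⟩ else ⟨_, hK.1.some_mem⟩
  have hf' : ∀ c (hc : c ∈ C), f' c = ⟨f c, hfK c hc⟩ := fun c hc => dif_pos (hfK c hc)
  obtain ⟨g, hg, hgf⟩ := h B C hC hCind f' fun c hc s => by
    rw [hf' c hc, hf' _ (hC.2 c hc s)]
    exact Subtype.ext (hf c hc s)
  refine ⟨fun b => g b, fun b s => congrArg Subtype.val (hg b s), fun b => (g b).2, ?_⟩
  intro c hc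
  simp only [hgf hc, hf' c hc]

section Pushout
variable {C : Set B} {f : B → A}

open Classical in
/-- The pushout of `C ⊆ B` along `f : C → A` is the quotient of `B ⊕ A` by the kernel of
this map. -/
noncomputable def pushoutNormalForm (C : Set B) (f : B → A) : B ⊕ A → B ⊕ A
  | .inl b => if b ∈ C then .inr (f b) else .inl b
  | .inr a => .inr a

lemma pushoutNormalForm_act (hC : IsSubact S C) (hf : IsActHomOn S f C) (x : B ⊕ A) (s : S) :
    pushoutNormalForm C f (pushoutNormalForm C f x ⊛ s) = pushoutNormalForm C f (x ⊛ s) := by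
  rcases x with b | a
  · by_cases hb : b ∈ C
    · simp only [pushoutNormalForm, if_pos hb, RightAct.sum_inl_act, RightAct.sum_inr_act,
        if_pos (hC.2 b hb s), hf b hb s]
    · simp only [pushoutNormalForm, if_neg hb]
  · rfl

lemma pushoutNormalForm_eq_act (hC : IsSubact S C) (hf : IsActHomOn S f C) {x y : B ⊕ A}
    (hxy : pushoutNormalForm C f x = pushoutNormalForm C f y) (s : S) :
    pushoutNormalForm C f (x ⊛ s) = pushoutNormalForm C f (y ⊛ s) := by
  rw [← pushoutNormalForm_act hC hf, hxy, pushoutNormalForm_act hC hf]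

lemma InDInjective.of_pInDInjective (hA : Indecomposable S A) (h : PInDInjective S A) :
    InDInjective S A := by
  intro B _ C hC hCind f hf
  let := RightAct.quotient (Setoid.ker (pushoutNormalForm C f))
    fun _ _ s hxy => pushoutNormalForm_eq_act hC hf hxy s
  let ι : A → Quotient (Setoid.ker (pushoutNormalForm C f)) := fun a => ⟦.inr a⟧
  have hι : Function.Injective ι := fun a a' h => Sum.inr_injective (Quotient.exact h)
  have := RightAct.nonempty S (A := A)
  have hinv : ∀ a, Function.invFun ι (ι a) = a := Function.leftInverse_invFun hι
  -- extending `invFun ι` from the copy of `A` gives a retraction of the pushout onto `A`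
  obtain ⟨r, hr, hrι⟩ := h _ (ι '' Set.univ) ((isSubact_univ S A).image fun _ _ _ => rfl)
    (IndecomposableSet.image hA (isSubact_univ S A) fun _ _ _ => rfl) (Function.invFun ι)
    (by rintro _ ⟨a, -, rfl⟩ s; exact (hinv _).trans (congrArg (· ⊛ s) (hinv a)).symm)
    (by rintro _ ⟨a, -, rfl⟩ _ ⟨a', -, rfl⟩ h; rw [hinv, hinv] at h; rw [h])
  refine ⟨fun b => r ⟦.inl b⟧, fun b s => hr ⟦.inl b⟧ s, fun c hc => ?_⟩
  have hglue : (⟦.inl c⟧ : Quotient (Setoid.ker (pushoutNormalForm C f))) = ι (f c) :=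
    Quotient.sound (by simp [pushoutNormalForm, hc])
  simp only [hglue, hrι ⟨f c, trivial, rfl⟩, hinv]

end Pushout

lemma inDInjective_of_forall_indecomposable
    (h : ∀ (K : Type u) [RightAct S K], Indecomposable S K → InDInjective S K) :
    InDInjective S A := by
  intro B _ C hC hCind f hf
  have hK : IsSubact S (f '' C) := hC.image hf
  let := RightAct.subtype hK
  obtain ⟨g, hg, -, hgf⟩ := inDInjectiveSet_of_subtype hK
    (h _ (indecomposable_subtype hK (hCind.image hC hf))) B C hC hCind f hf
    fun c hc => ⟨c, hc, rfl⟩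
  exact ⟨g, hg, hgf⟩

lemma exists_isLeftZero (h : InDInjective S S) : ∃ z, IsLeftZero S z := by
  let C : Set (Option S) := Set.range some
  have hC : IsSubact S C :=
    ⟨⟨some 1, 1, rfl⟩, by rintro _ ⟨x, rfl⟩ s; exact ⟨x ⊛ s, rfl⟩⟩
  have hCind : IndecomposableSet S C := indecomposableSet_of_eqvGen (e := some 1) <| by
    rintro _ ⟨x, rfl⟩
    exact .rel _ _ ⟨⟨1, rfl⟩, x, congrArg some (one_mul x).symm⟩
  obtain ⟨g, hg, -⟩ := h (Option S) C hC hCind (fun o => o.getD 1)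
    (by rintro _ ⟨x, rfl⟩ s; rfl)
  exact ⟨g none, fun s => (hg none s).symm⟩

lemma eq_of_isLeftZero (h : ∀ (A : Type u) [RightAct S A], InDInjective S A) {z₁ z₂ : S}
    (hz₁ : IsLeftZero S z₁) (hz₂ : IsLeftZero S z₂) : z₁ = z₂ := by
  let C : Set (S × S) := Set.range (fun s => (s, z₁)) ∪ Set.range (fun s => (z₂, s))
  have mem_left : ∀ s, (s, z₁) ∈ C := fun s => Or.inl ⟨s, rfl⟩
  have mem_right : ∀ s, (z₂, s) ∈ C := fun s => Or.inr ⟨s, rfl⟩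
  have hC : IsSubact S C := by
    refine ⟨⟨_, mem_left 1⟩, ?_⟩
    rintro _ (⟨t, rfl⟩ | ⟨t, rfl⟩) s
    · simpa [hz₁ s] using mem_left (t * s)
    · simpa [hz₂ s] using mem_right (t * s)
  have hCind : IndecomposableSet S C := by
    refine indecomposableSet_of_eqvGen (e := ((1 : S), z₁)) ?_
    rintro _ (⟨t, rfl⟩ | ⟨t, rfl⟩)
    · exact .rel _ _ ⟨mem_left 1, t, by simp [hz₁ t]⟩
    · -- the two cyclic pieces meet at `(1, z₁) ⊛ z₂ = (z₂, z₁) = (z₂, 1) ⊛ z₁`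
      have h₁ : Relation.EqvGen (ActRelOn S C) ((1 : S), z₁) (z₂, z₁) :=
        .rel _ _ ⟨mem_left 1, z₂, by simp [hz₁ z₂]⟩
      have h₂ : Relation.EqvGen (ActRelOn S C) (z₂, (1 : S)) (z₂, z₁) :=
        .rel _ _ ⟨mem_right 1, z₁, by simp [hz₂ z₁]⟩
      have h₃ : Relation.EqvGen (ActRelOn S C) (z₂, (1 : S)) (z₂, t) :=
        .rel _ _ ⟨mem_right 1, t, by simp [hz₂ t]⟩
      exact h₁.trans _ _ _ (h₂.symm.trans _ _ _ h₃)
  let := RightAct.subtype hC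
  obtain ⟨g, hg, hgC, hgf⟩ := inDInjectiveSet_of_subtype hC (h C) (S × S) C hC hCind id
    (fun _ _ _ => rfl) fun _ hc => hc
  have hg₁ : g (1, 1) ⊛ z₁ = (z₁, z₁) := by
    rw [← hg, show ((1 : S), (1 : S)) ⊛ z₁ = (z₁, z₁) by simp]
    exact hgf (mem_left z₁)
  have hg₂ : g (1, 1) ⊛ z₂ = (z₂, z₂) := by
    rw [← hg, show ((1 : S), (1 : S)) ⊛ z₂ = (z₂, z₂) by simp]
    exact hgf (mem_right z₂)
  -- no element of `C` acts on `z₁` and `z₂` as `(1, 1)` does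
  rcases hgC (1, 1) with ⟨t, ht⟩ | ⟨t, ht⟩ <;>
    simp only [← ht, RightAct.prod_act, RightAct.self_act, Prod.mk.injEq] at hg₁ hg₂
  · exact (hz₁ z₂).symm.trans hg₂.2
  · exact ((hz₂ z₁).symm.trans hg₁.1).symm

lemma exists_forall_mul_eq (h : ∀ (A : Type u) [RightAct S A], InDInjective S A) :
    ∃ z : S, ∀ s, s * z = z := by
  obtain ⟨z, hz⟩ := exists_isLeftZero (h S)
  exact ⟨z, fun s => eq_of_isLeftZero h (fun t => by rw [mul_assoc, hz]) hz⟩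

lemma actInjective_of_inDInjective {z : S} (hz : ∀ s, s * z = z) (hA : InDInjective S A) :
    ActInjective S A := by
  intro B _ C hC f hf
  have fibre : ∀ e : B, (C ∩ {x | x ⊛ z = e}).Nonempty →
      ∃ g : B → A, IsActHom S g ∧ Set.EqOn g f (C ∩ {x | x ⊛ z = e}) := by
    intro e he
    refine hA B (C ∩ {x | x ⊛ z = e}) ⟨he, fun x hx s => ⟨hC.2 x hx.1 s, ?_⟩⟩ ?_ f
      fun x hx => hf x hx.1
    · exact (RightAct.act_mul x s z).trans ((congrArg _ (hz s)).trans hx.2)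
    · exact indecomposableSet_of_eqvGen fun x hx => .symm _ _ (.rel _ _ ⟨hx, z, hx.2.symm⟩)
  have extension : ∀ e : B,
      ∃ g : B → A, IsActHom S g ∧ Set.EqOn g f (C ∩ {x | x ⊛ z = e}) := by
    intro e
    by_cases he : (C ∩ {x | x ⊛ z = e}).Nonempty
    · exact fibre e he
    · obtain ⟨c₀, hc₀⟩ := hC.1
      obtain ⟨g, hg, -⟩ := fibre _ ⟨c₀, hc₀, rfl⟩
      exact ⟨g, hg, fun x hx => absurd ⟨x, hx⟩ he⟩
  choose g hg hgf using extension
  refine ⟨fun b => g (b ⊛ z) b, fun b s => ?_, fun c hc => hgf _ ⟨hc, rfl⟩⟩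
  simp only [RightAct.act_mul, hz]
  exact hg _ b s

end

theorem absolutely_injective_tfae (S : Type u) [Monoid S] :
    List.TFAE [
      ∀ (A : Type u) [RightAct S A], InDInjective S A,
      ∀ (A : Type u) [RightAct S A], Indecomposable S A → InDInjective S A,
      ∀ (A : Type u) [RightAct S A], PInDInjective S A,
      ∀ (A : Type u) [RightAct S A], Indecomposable S A → PInDInjective S A,
      ∀ (A : Type u) [RightAct S A], Indecomposable S A → ActInjective S A,
      ∀ (A : Type u) [RightAct S A], ActInjective S A ] := by
  tfae_have 1 → 2 := fun h A _ _ => h A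
  tfae_have 2 → 1 := fun h _ _ => inDInjective_of_forall_indecomposable h
  tfae_have 1 → 3 := fun h A _ => (h A).pInDInjective
  tfae_have 3 → 4 := fun h A _ _ => h A
  tfae_have 4 → 2 := fun h A _ hA => InDInjective.of_pInDInjective hA (h A hA)
  tfae_have 1 → 6 := fun h A _ => by
    obtain ⟨z, hz⟩ := exists_forall_mul_eq h
    exact actInjective_of_inDInjective hz (h A)
  tfae_have 6 → 5 := fun h A _ _ => h A
  tfae_have 5 → 4 := fun h A _ hA => (h A hA).inDInjective.pInDInjective
  tfae_finish
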